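/- arXiv:1410.1447 — 2 statements merged into one kernel-verified Lean document; each statement's English description precedes it below -/
import Mathlib

section
/- Let k ≥ 1, let u, v be complex numbers with u + v = 1, u ≠ 0 and u ≠ v, and set τ = v/u. Then for any pairwise distinct complex numbers ξ₁, …, ξ_k, the symmetrization identity holds: ∑_{σ ∈ S_k} ∏_{1 ≤ i < j ≤ k} (u + v ξ_{σ(i)} ξ_{σ(j)} − ξ_{σ(i)})/(ξ_{σ(j)} − ξ_{σ(i)}) = u^{k(k−1)/2} ∏_{i=1}^{k} (1 − τ^i)/(1 − τ), where the sum is over all permutations σ of {1, …, k}. -/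
/-!
Fixing `σ 0 = a` splits the sum over permutations of `Fin (n + 1)` into a sum over `a` of
`∏_{b ≠ a} f (ξ a) (ξ b)` times the same sum for the remaining `n` points. Hence, by induction,
the left side is `∏_{n = 1}^{k} c n` as soon as `∑_{x ∈ s} ∏_{y ∈ s \ {x}} f x y = c #s` for every
finite set `s`.

For `f x y = (u + v x y - x) / (y - x)` this one-variable sum is `(uⁿ - vⁿ) / (u - v)`. The
quadratic `x - u - v x²` vanishes at `1` and at `w = u / v`, so the Lagrange formula for the
(vanishing) coefficient of `X ^ (n + 1)` of `∏_{y ∈ s} (X - u - v X y)` on the `n + 2` nodes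
`s ∪ {1, w}` expresses the sum through the values at `1` and `w`. If `1` or `w` lies in `s`,
removing it gives the recursions `c (n + 1) = vⁿ + u c n`, resp. `uⁿ + v c n`; for `v = 0` the
sum is the Lagrange formula for the leading coefficient of `(X - 1) ^ (n - 1)`.
Finally `(uⁱ - vⁱ) / (u - v) = uⁱ⁻¹ (1 - τⁱ) / (1 - τ)`.
-/

open Finset Polynomial Equiv

theorem sum_prod_erase_insert {R α : Type*} [CommSemiring R] [DecidableEq α] (f : α → α → R)
    {a : α} {s : Finset α} (ha : a ∉ s) {b c : R} (hb : ∀ y ∈ s, f a y = b)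
    (hc : ∀ x ∈ s, f x a = c) :
    ∑ x ∈ insert a s, ∏ y ∈ (insert a s).erase x, f x y =
      b ^ #s + c * ∑ x ∈ s, ∏ y ∈ s.erase x, f x y := by
  rw [sum_insert ha, erase_insert ha, prod_congr rfl hb, prod_const, mul_sum]
  refine congrArg _ (sum_congr rfl fun x hx => ?_)
  have hax : a ≠ x := fun h => ha (h ▸ hx)
  rw [erase_insert_of_ne hax, prod_insert fun h => ha (mem_of_mem_erase h), hc x hx]

theorem prod_filter_fst_lt_snd {M : Type*} [CommMonoid M] {n : ℕ} (g : Fin n → Fin n → M) :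
    ∏ p ∈ univ.filter (fun p : Fin n × Fin n => p.1 < p.2), g p.1 p.2 =
      ∏ i, ∏ j ∈ Ioi i, g i j := by
  rw [prod_filter, Fintype.prod_prod_type]
  refine prod_congr rfl fun i _ => ?_
  rw [← filter_lt_eq_Ioi, prod_filter]

theorem prod_filter_fst_lt_snd_succ {M : Type*} [CommMonoid M] {n : ℕ}
    (g : Fin (n + 1) → Fin (n + 1) → M) :
    ∏ p ∈ univ.filter (fun p : Fin (n + 1) × Fin (n + 1) => p.1 < p.2), g p.1 p.2 =
      (∏ j : Fin n, g 0 j.succ) *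
        ∏ p ∈ univ.filter (fun p : Fin n × Fin n => p.1 < p.2), g p.1.succ p.2.succ := by
  rw [prod_filter_fst_lt_snd, prod_filter_fst_lt_snd fun i j => g i.succ j.succ]
  simp only [Fin.prod_univ_succ, Fin.prod_Ioi_zero, Fin.prod_Ioi_succ]

theorem image_swap_zero_succ {n : ℕ} (a : Fin (n + 1)) :
    univ.image (fun j : Fin n => swap 0 a j.succ) = univ.erase a := by
  ext b; simp [swap_apply_eq_iff, Fin.exists_succ_eq]

theorem sum_perm_prod_filter_lt_eq_prod_range {R α : Type*} [CommSemiring R] [DecidableEq α]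
    (f : α → α → R) (c : ℕ → R)
    (hc : ∀ s : Finset α, ∑ x ∈ s, ∏ y ∈ s.erase x, f x y = c #s) {k : ℕ} (ξ : Fin k → α)
    (hξ : Function.Injective ξ) :
    ∑ σ : Perm (Fin k), ∏ p ∈ univ.filter (fun p : Fin k × Fin k => p.1 < p.2),
      f (ξ (σ p.1)) (ξ (σ p.2)) = ∏ i ∈ range k, c (i + 1) := by
  induction k with
  | zero => simp
  | succ n ih =>
    have hsucc (a : Fin (n + 1)) : Function.Injective fun j : Fin n => swap 0 a j.succ :=
      (swap 0 a).injective.comp (Fin.succ_injective n)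
    have hrow (a : Fin (n + 1)) : ∏ j : Fin n, f (ξ a) (ξ (swap 0 a j.succ)) =
        ∏ y ∈ (univ.image ξ).erase (ξ a), f (ξ a) y := by
      rw [← image_erase hξ, ← image_swap_zero_succ, image_image, prod_image
        fun i _ j _ h => (hξ.comp (hsucc a)) h]
      rfl
    have hinner (a : Fin (n + 1)) : ∑ π : Perm (Fin n),
        (∏ j, f (ξ a) (ξ (swap 0 a (π j).succ))) *
          ∏ p ∈ univ.filter (fun p : Fin n × Fin n => p.1 < p.2),
            f (ξ (swap 0 a (π p.1).succ)) (ξ (swap 0 a (π p.2).succ)) =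
        (∏ y ∈ (univ.image ξ).erase (ξ a), f (ξ a) y) * ∏ i ∈ range n, c (i + 1) := by
      rw [← hrow, ← ih _ (hξ.comp (hsucc a)), mul_sum]
      refine sum_congr rfl fun π _ => ?_
      rw [Equiv.prod_comp π fun j => f (ξ a) (ξ (swap 0 a j.succ))]
      rfl
    rw [← Perm.decomposeFin.symm.sum_comp, Fintype.sum_prod_type, prod_range_succ, mul_comm]
    refine (sum_congr rfl fun a _ => sum_congr rfl fun π _ => prod_filter_fst_lt_snd_succ
      fun i j => f (ξ (Perm.decomposeFin.symm (a, π) i))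
        (ξ (Perm.decomposeFin.symm (a, π) j))).trans ?_
    simp only [Perm.decomposeFin_symm_apply_zero, Perm.decomposeFin_symm_apply_succ, hinner,
      ← sum_mul]
    have hsum := hc (univ.image ξ)
    rw [sum_image hξ.injOn, card_image_of_injective _ hξ, card_fin] at hsum
    rw [hsum]

section PairFactor

variable {K : Type*} [Field K]

def pairFactor (u v x y : K) : K := (u + v * x * y - x) / (y - x)

theorem pairFactor_eq (u v x y : K) : pairFactor u v x y = (x - u - v * x * y) / (x - y) := by
  rw [pairFactor, ← neg_div_neg_eq]; ring_nf

variable {u v w x y : K}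

theorem pairFactor_one_left (huv : u + v = 1) (hy : y ≠ 1) : pairFactor u v 1 y = v := by
  rw [pairFactor, div_eq_iff (sub_ne_zero.2 hy)]; linear_combination huv

theorem pairFactor_one_right (huv : u + v = 1) (hx : x ≠ 1) : pairFactor u v x 1 = u := by
  rw [pairFactor, div_eq_iff (sub_ne_zero.2 hx.symm)]; linear_combination x * huv

theorem pairFactor_left_of_mul_eq (huv : u + v = 1) (hw : v * w = u) (hy : y ≠ w) :
    pairFactor u v w y = u := by
  rw [pairFactor, div_eq_iff (sub_ne_zero.2 hy)]; linear_combination (y - 1) * hw + w * huv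

theorem pairFactor_right_of_mul_eq (huv : u + v = 1) (hw : v * w = u) (hx : x ≠ w) :
    pairFactor u v x w = v := by
  rw [pairFactor, div_eq_iff (sub_ne_zero.2 hx.symm)]; linear_combination (x - 1) * hw + x * huv

noncomputable def pairPoly (u v : K) (s : Finset K) : K[X] :=
  ∏ y ∈ s, (X - C u - C v * X * C y)

theorem eval_pairPoly (u v z : K) (s : Finset K) :
    (pairPoly u v s).eval z = ∏ y ∈ s, (z - u - v * z * y) := by
  simp only [pairPoly, eval_prod, eval_sub, eval_mul, eval_X, eval_C]

theorem natDegree_pairPoly_le (u v : K) (s : Finset K) : (pairPoly u v s).natDegree ≤ #s :=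
  (natDegree_prod_le _ _).trans
    ((sum_le_card_nsmul s _ 1 fun _ _ => by compute_degree).trans_eq (by simp))

theorem eval_pairPoly_one (huv : u + v = 1) (s : Finset K) :
    (pairPoly u v s).eval 1 = v ^ #s * ∏ y ∈ s, (1 - y) := by
  rw [eval_pairPoly, pow_card_mul_prod]
  exact prod_congr rfl fun y _ => by linear_combination -huv

theorem eval_pairPoly_of_mul_eq (huv : u + v = 1) (hw : v * w = u) (s : Finset K) :
    (pairPoly u v s).eval w = u ^ #s * ∏ y ∈ s, (w - y) := by
  rw [eval_pairPoly, pow_card_mul_prod]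
  exact prod_congr rfl fun y _ => by linear_combination (1 - y) * hw - w * huv

variable [DecidableEq K]

theorem prod_erase_pairFactor (u v x : K) (s : Finset K) :
    ∏ y ∈ s.erase x, pairFactor u v x y =
      (∏ y ∈ s.erase x, (x - u - v * x * y)) / ∏ y ∈ s.erase x, (x - y) := by
  simp only [pairFactor_eq, prod_div_distrib]

theorem eval_pairPoly_of_mem (huv : u + v = 1) (hw : v * w = u) {s : Finset K} {x : K}
    (hx : x ∈ s) : (pairPoly u v s).eval x =
      -v * ((x - 1) * (x - w)) * ∏ y ∈ s.erase x, (x - u - v * x * y) := by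
  rw [eval_pairPoly, ← mul_prod_erase s _ hx]
  congr 1
  linear_combination (1 - x) * hw - x * huv

theorem sum_prod_pairFactor_of_notMem (huv : u + v = 1) (hw : v * w = u) (hne : u ≠ v)
    {s : Finset K} (h1 : 1 ∉ s) (hws : w ∉ s) :
    ∑ x ∈ s, ∏ y ∈ s.erase x, pairFactor u v x y = (u ^ #s - v ^ #s) / (u - v) := by
  have hv : v ≠ 0 := by rintro rfl; exact hne (by simp [← hw])
  have hw1 : w ≠ 1 := by rintro rfl; exact hne (by simpa using hw.symm)
  have h1w : 1 ∉ insert w s := by simp [Ne.symm hw1, h1]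
  have hcard : #(insert 1 (insert w s)) = #s + 2 := by
    rw [card_insert_of_notMem h1w, card_insert_of_notMem hws]
  have hlag := Lagrange.coeff_eq_sum (v := id) (Set.injOn_id _) (s := insert 1 (insert w s))
    (P := pairPoly u v s) ((degree_le_natDegree).trans_lt
      (by rw [hcard]; exact_mod_cast (natDegree_pairPoly_le u v s).trans_lt (by omega)))
  rw [coeff_eq_zero_of_natDegree_lt (by have := natDegree_pairPoly_le u v s; omega),
    sum_insert h1w, sum_insert hws] at hlag
  have at_one : (pairPoly u v s).eval 1 / ∏ y ∈ (insert 1 (insert w s)).erase 1, (1 - y) =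
      v ^ #s / (1 - w) := by
    have hne : ∏ y ∈ s, (1 - y) ≠ 0 :=
      prod_ne_zero_iff.2 fun y hy => sub_ne_zero.2 (ne_of_mem_of_not_mem hy h1).symm
    rw [erase_insert h1w, prod_insert hws, eval_pairPoly_one huv, mul_div_mul_right _ _ hne]
  have at_w : (pairPoly u v s).eval w / ∏ y ∈ (insert 1 (insert w s)).erase w, (w - y) =
      -(u ^ #s / (1 - w)) := by
    have hne : ∏ y ∈ s, (w - y) ≠ 0 :=
      prod_ne_zero_iff.2 fun y hy => sub_ne_zero.2 (ne_of_mem_of_not_mem hy hws).symm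
    rw [erase_insert_of_ne hw1.symm, erase_insert hws, prod_insert h1,
      eval_pairPoly_of_mul_eq huv hw, mul_div_mul_right _ _ hne, ← neg_sub 1 w, div_neg]
  have at_node : ∀ x ∈ s,
      (pairPoly u v s).eval x / ∏ y ∈ (insert 1 (insert w s)).erase x, (x - y) =
        -v * ∏ y ∈ s.erase x, pairFactor u v x y := by
    intro x hx
    have hx1 : x ≠ 1 := ne_of_mem_of_not_mem hx h1
    have hxw : x ≠ w := ne_of_mem_of_not_mem hx hws
    rw [erase_insert_of_ne hx1.symm, erase_insert_of_ne hxw.symm,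
      prod_insert fun h => h1w (insert_subset_insert _ (erase_subset _ _) h),
      prod_insert fun h => hws (mem_of_mem_erase h), eval_pairPoly_of_mem huv hw hx,
      prod_erase_pairFactor]
    field_simp [sub_ne_zero.2 hx1, sub_ne_zero.2 hxw]
  simp only [id] at hlag
  rw [at_one, at_w, sum_congr rfl at_node, ← mul_sum] at hlag
  rw [eq_div_iff (sub_ne_zero.2 hne)]
  field_simp [sub_ne_zero.2 hw1.symm] at hlag
  linear_combination -hlag - (∑ x ∈ s, ∏ y ∈ s.erase x, pairFactor u v x y) * hw

theorem sum_prod_pairFactor_one_zero {s : Finset K} (hs : s.Nonempty) :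
    ∑ x ∈ s, ∏ y ∈ s.erase x, pairFactor 1 0 x y = 1 := by
  have hdeg : ((X - C 1 : K[X]) ^ (#s - 1)).natDegree = #s - 1 := by
    rw [natDegree_pow, natDegree_X_sub_C, mul_one]
  have hlag := Lagrange.coeff_eq_sum (v := id) (Set.injOn_id _) (s := s)
    (P := (X - C 1) ^ (#s - 1)) (by
      rw [degree_eq_natDegree (pow_ne_zero _ (X_sub_C_ne_zero 1)), hdeg]
      exact_mod_cast Nat.sub_lt hs.card_pos one_pos)
  have hco : ((X - C (1 : K)) ^ (#s - 1)).coeff (#s - 1) = 1 := by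
    simpa only [hdeg] using ((monic_X_sub_C (1 : K)).pow (#s - 1)).coeff_natDegree
  rw [hco] at hlag
  refine (sum_congr rfl fun x hx => ?_).trans hlag.symm
  rw [prod_erase_pairFactor, ← card_erase_of_mem hx]
  simp

theorem sum_prod_pairFactor (huv : u + v = 1) (hne : u ≠ v) (s : Finset K) :
    ∑ x ∈ s, ∏ y ∈ s.erase x, pairFactor u v x y = (u ^ #s - v ^ #s) / (u - v) := by
  rcases eq_or_ne v 0 with rfl | hv
  · obtain rfl : u = 1 := by simpa using huv
    rcases s.eq_empty_or_nonempty with rfl | hs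
    · simp
    · rw [sum_prod_pairFactor_one_zero hs, zero_pow (card_ne_zero.2 hs)]; simp
  set w := u / v
  have hw : v * w = u := mul_div_cancel₀ u hv
  let Q (t : Finset K) : Prop :=
    ∑ x ∈ t, ∏ y ∈ t.erase x, pairFactor u v x y = (u ^ #t - v ^ #t) / (u - v)
  have of_erase : ∀ a, (∀ t, a ∉ t → Q t → Q (insert a t)) → ∀ t, Q (t.erase a) → Q t := by
    intro a hins t ht
    by_cases ha : a ∈ t
    · exact insert_erase ha ▸ hins _ (notMem_erase a t) ht
    · rwa [erase_eq_of_notMem ha] at ht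
  have insert_one : ∀ t, 1 ∉ t → Q t → Q (insert 1 t) := by
    intro t ht hQ
    simp only [Q] at hQ ⊢
    rw [sum_prod_erase_insert _ ht
      (fun y hy => pairFactor_one_left huv (ne_of_mem_of_not_mem hy ht))
      (fun x hx => pairFactor_one_right huv (ne_of_mem_of_not_mem hx ht)), hQ,
      card_insert_of_notMem ht]
    field_simp [sub_ne_zero.2 hne]
    ring
  have insert_w : ∀ t, w ∉ t → Q t → Q (insert w t) := by
    intro t ht hQ
    simp only [Q] at hQ ⊢
    rw [sum_prod_erase_insert _ ht
      (fun y hy => pairFactor_left_of_mul_eq huv hw (ne_of_mem_of_not_mem hy ht))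
      (fun x hx => pairFactor_right_of_mul_eq huv hw (ne_of_mem_of_not_mem hx ht)), hQ,
      card_insert_of_notMem ht]
    field_simp [sub_ne_zero.2 hne]
    ring
  exact of_erase 1 insert_one s <| of_erase w insert_w _ <|
    sum_prod_pairFactor_of_notMem huv hw hne (by simp) (by simp)

end PairFactor

theorem stmt0_general (k : ℕ) (u v : ℂ) (huv : u + v = 1) (hu : u ≠ 0)
    (huneqv : u ≠ v) (ξ : Fin k → ℂ) (hξ : Function.Injective ξ) :
    ∑ σ : Equiv.Perm (Fin k),
      ∏ p ∈ Finset.univ.filter (fun p : Fin k × Fin k => p.1 < p.2),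
        (u + v * ξ (σ p.1) * ξ (σ p.2) - ξ (σ p.1)) / (ξ (σ p.2) - ξ (σ p.1))
    = u ^ (k * (k - 1) / 2) *
        ∏ i ∈ Finset.range k, (1 - (v / u) ^ (i + 1)) / (1 - v / u) := by
  have hq (i : ℕ) : (u ^ (i + 1) - v ^ (i + 1)) / (u - v) =
      u ^ i * ((1 - (v / u) ^ (i + 1)) / (1 - v / u)) := by
    rw [div_pow, one_sub_div hu, one_sub_div (pow_ne_zero _ hu), div_div_div_eq, pow_succ]
    field_simp
  calc _ = ∏ i ∈ range k, (u ^ (i + 1) - v ^ (i + 1)) / (u - v) :=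
        sum_perm_prod_filter_lt_eq_prod_range (pairFactor u v) (fun n => (u ^ n - v ^ n) / (u - v))
          (sum_prod_pairFactor huv huneqv) ξ hξ
    _ = _ := by
      rw [prod_congr rfl fun i _ => hq i, prod_mul_distrib, prod_pow_eq_pow_sum, sum_range_id]

/-- Symmetrization identity for the MADM:
`∑_{σ ∈ S_k} ∏_{i<j} (u + v ξ_{σ(i)} ξ_{σ(j)} − ξ_{σ(i)})/(ξ_{σ(j)} − ξ_{σ(i)})
  = u^{k(k−1)/2} ∏_{i=1}^{k} (1 − τ^i)/(1 − τ)` with `τ = v/u`. -/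
theorem stmt0 (k : ℕ) (hk : 1 ≤ k) (u v : ℂ) (huv : u + v = 1) (hu : u ≠ 0)
    (huneqv : u ≠ v) (ξ : Fin k → ℂ) (hξ : Function.Injective ξ) :
    ∑ σ : Equiv.Perm (Fin k),
      ∏ p ∈ Finset.univ.filter (fun p : Fin k × Fin k => p.1 < p.2),
        (u + v * ξ (σ p.1) * ξ (σ p.2) - ξ (σ p.1)) / (ξ (σ p.2) - ξ (σ p.1))
    = u ^ (k * (k - 1) / 2) *
        ∏ i ∈ Finset.range k, (1 - (v / u) ^ (i + 1)) / (1 - v / u) :=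
  stmt0_general k u v huv hu huneqv ξ hξ
end

section
/- Let τ be real with 0 < τ < 1, let x ∈ ℤ, t ∈ ℝ, and let η be a complex number with |η| < 1. Define φ(ζ) = ((1 − ζ)/(1 − τζ))^x · exp([1/(1 − ζ) − 1/(1 − τζ)]t) · 1/(τ^{-1} − ζ). Then the sequence n ↦ τ^{-1} φ(τⁿη) (n = 0, 1, 2, …) is multipliable, the sequence n ↦ τ^{-1}/(τ^{-1} − τⁿη) is multipliable, and ∏_{n=0}^{∞} τ^{-1} φ(τⁿη) = (1 − η)^x · exp(tη/(1 − η)) · ∏_{n=0}^{∞} τ^{-1}/(τ^{-1} − τⁿη). -/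
/-!
With `g z = (1 - z)^x e^{t/(1-z)}` one has `τ⁻¹ φ(ζ) = g(ζ)/g(τζ) · τ⁻¹/(τ⁻¹ - ζ)` identically.
Along the orbit `τⁿη → 0` the first factor telescopes to `g(η)/g(0) = (1 - η)^x e^{tη/(1-η)}`.
Convergence: each factor is `F(τⁿη)` with `F` differentiable at `0` and `F 0 = 1`, so
`F(τⁿη) - 1 = O(τⁿ)` is summable.
-/

open Filter Topology

section GeometricOrbit

variable {𝕜 : Type*} [NontriviallyNormedField 𝕜]

lemma summable_norm_geometric_mul {q : 𝕜} (hq : ‖q‖ < 1) (η : 𝕜) :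
    Summable fun n : ℕ => ‖q ^ n * η‖ := by
  simpa [norm_mul, norm_pow] using
    (summable_geometric_of_lt_one (norm_nonneg q) hq).mul_right ‖η‖

lemma multipliable_comp_geometric_mul [CompleteSpace 𝕜] {F : 𝕜 → 𝕜} (hF0 : F 0 = 1)
    (hF : DifferentiableAt 𝕜 F 0) {q : 𝕜} (hq : ‖q‖ < 1) (η : 𝕜) :
    Multipliable fun n : ℕ => F (q ^ n * η) := by
  have hO : (fun z => F z - 1) =O[𝓝 0] fun z => z := by
    simpa only [hF0, sub_zero] using hF.isBigO_sub
  simpa using multipliable_one_add_of_summable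
    (hO.comp_summable_norm (summable_norm_geometric_mul hq η))

lemma Finset.prod_range_div_succ₀ {K : Type*} [Field K] {u : ℕ → K} (hu : ∀ n, u n ≠ 0)
    (N : ℕ) : ∏ i ∈ Finset.range N, u i / u (i + 1) = u 0 / u N := by
  induction N with
  | zero => simp [hu 0]
  | succ N ih =>
    rw [Finset.prod_range_succ, ih, div_mul_div_comm, mul_comm (u 0),
      mul_div_mul_left _ _ (hu N)]

lemma hasProd_div_comp_mul_geometric [CompleteSpace 𝕜] {g : 𝕜 → 𝕜}
    (hg : DifferentiableAt 𝕜 g 0) (hg0 : g 0 ≠ 0) {q : 𝕜} (hq : ‖q‖ < 1) {η : 𝕜}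
    (hgη : ∀ n : ℕ, g (q ^ n * η) ≠ 0) :
    HasProd (fun n : ℕ => g (q ^ n * η) / g (q * (q ^ n * η))) (g η / g 0) := by
  have hshift : ∀ n : ℕ, q * (q ^ n * η) = q ^ (n + 1) * η := fun n => by ring
  have hgq : DifferentiableAt 𝕜 (fun z => g (q * z)) 0 := by
    rw [← mul_zero q] at hg
    exact hg.comp 0 (by fun_prop)
  have hmult : Multipliable fun n : ℕ => g (q ^ n * η) / g (q * (q ^ n * η)) :=
    multipliable_comp_geometric_mul (F := fun z => g z / g (q * z)) (by simp [hg0])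
      (hg.div hgq (by simpa using hg0)) hq η
  have horbit : Tendsto (fun n : ℕ => q ^ n * η) atTop (𝓝 0) := by
    simpa using (tendsto_pow_atTop_nhds_zero_of_norm_lt_one hq).mul_const η
  rw [hmult.hasProd_iff_tendsto_nat]
  simp only [hshift, Finset.prod_range_div_succ₀ hgη, pow_zero, one_mul]
  exact tendsto_const_nhds.div (hg.continuousAt.tendsto.comp horbit) hg0

end GeometricOrbit

lemma one_sub_ne_zero_of_norm_lt_one {𝕜 : Type*} [NormedDivisionRing 𝕜] {z : 𝕜}
    (hz : ‖z‖ < 1) : 1 - z ≠ 0 := by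
  rw [sub_ne_zero]
  rintro rfl
  simp at hz

lemma div_zpow_mul_exp_sub (q ζ t : ℂ) (x : ℤ) :
    ((1 - ζ) / (1 - q * ζ)) ^ x * Complex.exp ((1 / (1 - ζ) - 1 / (1 - q * ζ)) * t)
      = (1 - ζ) ^ x * Complex.exp (t / (1 - ζ))
        / ((1 - q * ζ) ^ x * Complex.exp (t / (1 - q * ζ))) := by
  rw [div_zpow, mul_div_mul_comm, ← Complex.exp_sub]
  congr 3
  ring

/-- Telescoping of the infinite product defining `φ_∞`: with
`φ(ζ) = ((1 − ζ)/(1 − τζ))^x · exp([1/(1 − ζ) − 1/(1 − τζ)]t) / (τ⁻¹ − ζ)`,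
for `|η| < 1` the products `∏_{n≥0} τ⁻¹ φ(τⁿη)` and `∏_{n≥0} τ⁻¹/(τ⁻¹ − τⁿη)` converge and
`∏_{n≥0} τ⁻¹ φ(τⁿη) = (1 − η)^x e^{tη/(1−η)} ∏_{n≥0} τ⁻¹/(τ⁻¹ − τⁿη)`. -/
theorem stmt9 (τ : ℝ) (hτ0 : 0 < τ) (hτ1 : τ < 1) (x : ℤ) (t : ℝ) (η : ℂ) (hη : ‖η‖ < 1)
    (φ : ℂ → ℂ)
    (hφ : ∀ ζ : ℂ, φ ζ = ((1 - ζ) / (1 - (τ : ℂ) * ζ)) ^ x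
        * Complex.exp ((1 / (1 - ζ) - 1 / (1 - (τ : ℂ) * ζ)) * (t : ℂ))
        * (1 / ((τ : ℂ)⁻¹ - ζ))) :
    Multipliable (fun n : ℕ => (τ : ℂ)⁻¹ * φ ((τ : ℂ) ^ n * η)) ∧
    Multipliable (fun n : ℕ => (τ : ℂ)⁻¹ / ((τ : ℂ)⁻¹ - (τ : ℂ) ^ n * η)) ∧
    ∏' n : ℕ, (τ : ℂ)⁻¹ * φ ((τ : ℂ) ^ n * η)
      = (1 - η) ^ x * Complex.exp ((t : ℂ) * η / (1 - η))
          * ∏' n : ℕ, (τ : ℂ)⁻¹ / ((τ : ℂ)⁻¹ - (τ : ℂ) ^ n * η) := by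
  have hτ : ‖(τ : ℂ)‖ < 1 := by rwa [Complex.norm_real, Real.norm_of_nonneg hτ0.le]
  have hτinv : (τ : ℂ)⁻¹ ≠ 0 := by exact_mod_cast (inv_pos.2 hτ0).ne'
  have horbit : ∀ n : ℕ, ‖(τ : ℂ) ^ n * η‖ < 1 := fun n => by
    rw [norm_mul, norm_pow]
    exact (mul_le_of_le_one_left (norm_nonneg η) (pow_le_one₀ (norm_nonneg _) hτ.le)).trans_lt hη
  set g : ℂ → ℂ := fun z => (1 - z) ^ x * Complex.exp (t / (1 - z))
  have hg0 : g 0 = Complex.exp t := by simp [g]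
  have hA := hasProd_div_comp_mul_geometric (g := g) (by fun_prop (disch := simp))
    (hg0 ▸ Complex.exp_ne_zero _) hτ fun n =>
      mul_ne_zero (zpow_ne_zero x (one_sub_ne_zero_of_norm_lt_one (horbit n)))
        (Complex.exp_ne_zero _)
  have hG : Multipliable fun n : ℕ => (τ : ℂ)⁻¹ / ((τ : ℂ)⁻¹ - (τ : ℂ) ^ n * η) :=
    multipliable_comp_geometric_mul (F := fun z => (τ : ℂ)⁻¹ / ((τ : ℂ)⁻¹ - z))
      (by simp [hτinv]) (by fun_prop (disch := simpa using hτinv)) hτ η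
  have hfactor : (fun n : ℕ => (τ : ℂ)⁻¹ * φ ((τ : ℂ) ^ n * η)) = fun n =>
      g ((τ : ℂ) ^ n * η) / g (τ * ((τ : ℂ) ^ n * η))
        * ((τ : ℂ)⁻¹ / ((τ : ℂ)⁻¹ - (τ : ℂ) ^ n * η)) := by
    funext n
    rw [hφ, div_zpow_mul_exp_sub]
    ring
  have hprod := hA.mul hG.hasProd
  rw [← hfactor] at hprod
  refine ⟨hprod.multipliable, hG, hprod.tprod_eq.trans (congrArg (· * _) ?_)⟩
  have h1η := one_sub_ne_zero_of_norm_lt_one hη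
  rw [hg0, mul_div_assoc, ← Complex.exp_sub]
  congr 2
  field_simp
  ring
end
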